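/- (Dixon's summation theorem) For all nonnegative integers a₁, a₂, a₃, one has Υ₃(a₁, a₂, a₃) = Σ_{k ∈ ℤ} (−1)^k C(2a₁, a₁+k) C(2a₂, a₂+k) C(2a₃, a₃+k) = ((2a₁)!(2a₂)!(2a₃)!(a₁+a₂+a₃)!)/((a₁+a₂)!(a₁+a₃)!(a₂+a₃)!·a₁!·a₂!·a₃!). -/

import Mathlib

/-- Binomial coefficient `C(n, j)` for `n : ℕ` and `j : ℤ`, with the convention that
it is zero unless `0 ≤ j ≤ n`, as a rational number. -/
def ichoose (n : ℕ) (j : ℤ) : ℚ := if 0 ≤ j then (n.choose j.toNat : ℚ) else 0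

/-- `Υ_{m+1}(a₀, …, a_m) = Σ_{k ∈ ℤ} (−1)^k ∏ᵢ C(2aᵢ, aᵢ + k)`.  Only integers `k`
with `|k| ≤ a₀` can contribute (the factor `i = 0` vanishes otherwise), so the sum
over all of `ℤ` equals the finite sum over `|k| ≤ a₀`. -/
noncomputable def ups {m : ℕ} (a : Fin (m + 1) → ℕ) : ℚ :=
  ∑ k ∈ Finset.Icc (-(a 0 : ℤ)) (a 0 : ℤ),
    (-1 : ℚ) ^ k * ∏ i, ichoose (2 * a i) ((a i : ℤ) + k)

/-!
Zeilberger's method. Write `T_a(k)` for the summand and `S(a)` for the sum. Since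
`T(k+1) / T(k) = -(a-k)(b-k)(c-k) / ((a+k+1)(b+k+1)(c+k+1))`, the certificate
`g(k) = (a+k)(b+k)(c+k) T(k)` satisfies `g(k+1) - g(k) = -2 (abc + (a+b+c)k²) T(k)`, and `g`
vanishes at both ends of the range, so `Σₖ (abc + (a+b+c)k²) T(k) = 0`. Combined with the
absorption identity `((a+1)² - k²) T_{a+1}(k) = (2a+2)(2a+1) T_a(k)` this yields the recurrence
`(a+1)(a+b+1)(a+c+1) S(a+1) = (2a+2)(2a+1)(a+b+c+1) S(a)`, which the factorial quotient also
satisfies; at `a = 0` only `k = 0` contributes.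
-/

open Finset

lemma ichoose_of_neg (n : ℕ) {j : ℤ} (hj : j < 0) : ichoose n j = 0 := by
  simp [ichoose, not_le.mpr hj]

lemma ichoose_natCast (n k : ℕ) : ichoose n k = n.choose k := by
  simp [ichoose]

lemma ichoose_of_lt (n : ℕ) {j : ℤ} (hj : (n : ℤ) < j) : ichoose n j = 0 := by
  lift j to ℕ using by omega
  rw [ichoose_natCast, Nat.choose_eq_zero_of_lt (by omega), Nat.cast_zero]

lemma ichoose_succ_right_eq (n : ℕ) (j : ℤ) :
    ichoose n (j + 1) * (j + 1) = ichoose n j * (n - j) := by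
  rcases lt_or_ge j 0 with hj | hj
  · obtain rfl | hj' := eq_or_lt_of_le (show j ≤ -1 by omega)
    · simp [ichoose_of_neg n hj]
    · simp [ichoose_of_neg n hj, ichoose_of_neg n (show j + 1 < 0 by omega)]
  lift j to ℕ using hj
  rcases le_or_gt j n with hjn | hjn
  · have h := congrArg (Nat.cast : ℕ → ℚ) (Nat.choose_succ_right_eq n j)
    push_cast [Nat.cast_sub hjn] at h
    rw [show (j : ℤ) + 1 = ((j + 1 : ℕ) : ℤ) by push_cast; ring, ichoose_natCast,
      ichoose_natCast]
    push_cast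
    exact h
  · rw [ichoose_of_lt n (by omega), ichoose_of_lt n (by omega)]
    ring

lemma add_one_mul_ichoose_eq (n : ℕ) (j : ℤ) :
    (n + 1) * ichoose n j = ichoose (n + 1) (j + 1) * (j + 1) := by
  rcases lt_or_ge j 0 with hj | hj
  · obtain rfl | hj' := eq_or_lt_of_le (show j ≤ -1 by omega)
    · simp [ichoose_of_neg n hj]
    · simp [ichoose_of_neg n hj, ichoose_of_neg (n + 1) (show j + 1 < 0 by omega)]
  lift j to ℕ using hj
  have h := congrArg (Nat.cast : ℕ → ℚ) (Nat.add_one_mul_choose_eq n j)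
  push_cast at h
  rw [show (j : ℤ) + 1 = ((j + 1 : ℕ) : ℤ) by push_cast; ring, ichoose_natCast,
    ichoose_natCast]
  push_cast
  exact h

lemma ichoose_add_two_mul (n : ℕ) (j : ℤ) :
    ichoose (n + 2) (j + 1) * ((j + 1) * (n + 1 - j)) = (n + 2) * (n + 1) * ichoose n j := by
  have h₁ := ichoose_succ_right_eq (n + 1) j
  have h₂ := add_one_mul_ichoose_eq n j
  have h₃ := add_one_mul_ichoose_eq (n + 1) j
  push_cast at h₁ h₃
  linear_combination -(n + 1 - j) * h₃ - (n + 2) * (h₁ + h₂)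

lemma sum_Icc_int_sub {M : Type*} [AddCommGroup M] (f : ℤ → M) {m n : ℤ} (h : m ≤ n + 1) :
    ∑ i ∈ Icc m n, (f (i + 1) - f i) = f (n + 1) - f m := by
  induction n, (show m - 1 ≤ n by omega) using Int.leInduction with
  | base => simp
  | succ n hn ih =>
    rw [← insert_Icc_right_eq_Icc_add_one (by omega), sum_insert (by simp), ih (by omega)]
    abel

section Dixon

variable (a b c : ℕ)

noncomputable def dixonTerm (k : ℤ) : ℚ :=
  (-1) ^ k * (ichoose (2 * a) (a + k) * ichoose (2 * b) (b + k) * ichoose (2 * c) (c + k))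

noncomputable def dixonSum : ℚ :=
  ∑ k ∈ Icc (-(a : ℤ)) a, dixonTerm a b c k

noncomputable def dixonProduct : ℚ :=
  (((2 * a).factorial * (2 * b).factorial * (2 * c).factorial *
      (a + b + c).factorial : ℕ) : ℚ) /
    (((a + b).factorial * (a + c).factorial * (b + c).factorial *
      a.factorial * b.factorial * c.factorial : ℕ) : ℚ)

lemma dixonTerm_eq_zero {k : ℤ} (hk : (a : ℤ) < |k|) : dixonTerm a b c k = 0 := by
  have : ichoose (2 * a) (a + k) = 0 := by
    rcases lt_abs.mp hk with hk | hk
    · exact ichoose_of_lt _ (by push_cast; omega)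
    · exact ichoose_of_neg _ (by omega)
  simp [dixonTerm, this]

lemma dixonTerm_add_one (k : ℤ) :
    ((a + k + 1) * (b + k + 1) * (c + k + 1)) * dixonTerm a b c (k + 1) =
      -((a - k) * (b - k) * (c - k) * dixonTerm a b c k) := by
  have step (n : ℕ) : ichoose (2 * n) (n + (k + 1)) * (n + k + 1) =
      ichoose (2 * n) (n + k) * (n - k) := by
    rw [← add_assoc]
    convert ichoose_succ_right_eq (2 * n) (n + k) using 2 <;> push_cast <;> ring
  calc ((a + k + 1) * (b + k + 1) * (c + k + 1)) * dixonTerm a b c (k + 1)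
      = (-1) ^ (k + 1) * ((ichoose (2 * a) (a + (k + 1)) * (a + k + 1)) *
          (ichoose (2 * b) (b + (k + 1)) * (b + k + 1)) *
          (ichoose (2 * c) (c + (k + 1)) * (c + k + 1))) := by rw [dixonTerm]; ring
    _ = -((a - k) * (b - k) * (c - k) * dixonTerm a b c k) := by
      rw [step a, step b, step c, zpow_add_one₀ (by norm_num : (-1 : ℚ) ≠ 0), dixonTerm]
      ring

lemma sum_dixonTerm_moment :
    ∑ k ∈ Icc (-(a : ℤ)) a, ((a * b * c : ℚ) + (a + b + c) * k ^ 2) * dixonTerm a b c k =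
      0 := by
  set g : ℤ → ℚ := fun k ↦ (a + k) * (b + k) * (c + k) * dixonTerm a b c k
  have hstep (k : ℤ) :
      g (k + 1) - g k = -2 * (((a * b * c : ℚ) + (a + b + c) * k ^ 2) * dixonTerm a b c k) := by
    simp only [g]
    push_cast
    linear_combination dixonTerm_add_one a b c k
  have htop : g (a + 1) = 0 := by
    simp [g, dixonTerm_eq_zero a b c (k := a + 1) (by rw [abs_of_nonneg (by positivity)]; omega)]
  have hbot : g (-a) = 0 := by simp [g]
  have h := sum_Icc_int_sub g (show -(a : ℤ) ≤ a + 1 by omega)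
  rw [htop, hbot, sub_zero] at h
  simp only [hstep, ← mul_sum] at h
  simpa using h

lemma dixonTerm_succ_left (k : ℤ) :
    ((a + 1) ^ 2 - k ^ 2) * dixonTerm (a + 1) b c k =
      (2 * a + 2) * (2 * a + 1) * dixonTerm a b c k := by
  have h := ichoose_add_two_mul (2 * a) (a + k)
  rw [show 2 * a + 2 = 2 * (a + 1) by ring,
    show (a : ℤ) + k + 1 = ((a + 1 : ℕ) : ℤ) + k by push_cast; ring] at h
  simp only [dixonTerm]
  push_cast at h ⊢
  linear_combination (-1) ^ k * ichoose (2 * b) (b + k) * ichoose (2 * c) (c + k) * h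

lemma dixonSum_eq_sum_Icc_succ :
    dixonSum a b c = ∑ k ∈ Icc (-(a + 1 : ℤ)) (a + 1), dixonTerm a b c k := by
  refine sum_subset (Icc_subset_Icc (by omega) (by omega)) fun k hk hk' ↦
    dixonTerm_eq_zero a b c ?_
  simp only [mem_Icc] at hk hk'
  rw [lt_abs]
  omega

lemma dixonSum_succ :
    ((a + 1) * (a + b + 1) * (a + c + 1) : ℚ) * dixonSum (a + 1) b c =
      (2 * a + 2) * (2 * a + 1) * (a + b + c + 1) * dixonSum a b c := by
  have hsplit (k : ℤ) : ((a + 1) * (a + b + 1) * (a + c + 1) : ℚ) * dixonTerm (a + 1) b c k =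
      (a + b + c + 1) * (((a + 1) ^ 2 - k ^ 2) * dixonTerm (a + 1) b c k) +
        ((((a + 1 : ℕ) : ℚ) * b * c) + ((a + 1 : ℕ) + b + c) * k ^ 2) *
          dixonTerm (a + 1) b c k := by
    push_cast
    ring
  rw [dixonSum, mul_sum, dixonSum_eq_sum_Icc_succ]
  simp only [hsplit, sum_add_distrib, sum_dixonTerm_moment, dixonTerm_succ_left, ← mul_sum]
  push_cast
  ring

lemma dixonProduct_succ :
    ((a + 1) * (a + b + 1) * (a + c + 1) : ℚ) * dixonProduct (a + 1) b c =
      (2 * a + 2) * (2 * a + 1) * (a + b + c + 1) * dixonProduct a b c := by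
  rw [dixonProduct, dixonProduct, show 2 * (a + 1) = 2 * a + 1 + 1 by ring,
    show a + 1 + b = a + b + 1 by ring, show a + 1 + c = a + c + 1 by ring,
    show a + b + 1 + c = a + b + c + 1 by ring]
  simp only [Nat.factorial_succ]
  push_cast
  field_simp
  ring

lemma dixonSum_zero_left : dixonSum 0 b c = dixonProduct 0 b c := by
  have hsum : dixonSum 0 b c = (2 * b).choose b * (2 * c).choose c := by
    simp [dixonSum, dixonTerm, ichoose]
  rw [hsum, dixonProduct, Nat.cast_choose ℚ (show b ≤ 2 * b by omega),
    Nat.cast_choose ℚ (show c ≤ 2 * c by omega), show 2 * b - b = b by omega,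
    show 2 * c - c = c by omega]
  simp only [zero_add, Nat.cast_mul, mul_zero, Nat.factorial_zero, mul_one, one_mul]
  field_simp

lemma dixonSum_eq_dixonProduct : dixonSum a b c = dixonProduct a b c := by
  induction a with
  | zero => exact dixonSum_zero_left b c
  | succ a ih =>
    refine mul_left_cancel₀
      (show ((a + 1) * (a + b + 1) * (a + c + 1) : ℚ) ≠ 0 by positivity) ?_
    rw [dixonSum_succ, dixonProduct_succ, ih]

lemma ups_three : ups ![a, b, c] = dixonSum a b c := by
  simp [ups, dixonSum, dixonTerm, Fin.prod_univ_three, mul_assoc]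

end Dixon

/-- Dixon's summation theorem:
`Υ₃(a₁,a₂,a₃) = Σ_{k ∈ ℤ} (−1)^k C(2a₁,a₁+k) C(2a₂,a₂+k) C(2a₃,a₃+k)
  = (2a₁)!(2a₂)!(2a₃)!(a₁+a₂+a₃)! / ((a₁+a₂)!(a₁+a₃)!(a₂+a₃)!·a₁!·a₂!·a₃!)`. -/
theorem stmt4 (a₁ a₂ a₃ : ℕ) :
    ups ![a₁, a₂, a₃] =
      (((2 * a₁).factorial * (2 * a₂).factorial * (2 * a₃).factorial *
          (a₁ + a₂ + a₃).factorial : ℕ) : ℚ) /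
        (((a₁ + a₂).factorial * (a₁ + a₃).factorial * (a₂ + a₃).factorial *
          a₁.factorial * a₂.factorial * a₃.factorial : ℕ) : ℚ) := by
  rw [ups_three, dixonSum_eq_dixonProduct, dixonProduct]
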